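/- arXiv:1706.01015 — 7 statements merged into one kernel-verified Lean document; each statement's English description precedes it below -/
import Mathlib

section
/- For every integer n ≥ 2 and every real number r > 0, the values p_{n,r}(k) for k = 0, …, n−1 sum to 1, i.e. ∑_{k=0}^{n−1} [2r(2r+1)/((n+2r)(n−1+2r))] · (k+1) · ∏_{i=1}^{k} (n−i)/(n−i+2r−1) = 1 (where the empty product, for k = 0, equals 1). -/
open Filter Finset

/-- The probability mass function of the degree of a fixed vertex of the
split-and-drift random graph `G_{n,r}`:
`p_{n,r}(k) = [2r(2r+1)/((n+2r)(n−1+2r))] · (k+1) · ∏_{i=1}^{k} (n−i)/(n−i+2r−1)`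
for `k < n` (with the empty product equal to `1`), and `0` for `k ≥ n`. -/
noncomputable def splitDriftPMF (n : ℕ) (r : ℝ) (k : ℕ) : ℝ :=
  if k < n then
    2 * r * (2 * r + 1) / (((n : ℝ) + 2 * r) * ((n : ℝ) - 1 + 2 * r)) *
      ((k : ℝ) + 1) *
      ∏ i ∈ Finset.Icc 1 k, (((n : ℝ) - (i : ℝ)) / ((n : ℝ) - (i : ℝ) + 2 * r - 1))
  else 0

/-!
With `c = 2r` and `P(k) = ∏_{i=1}^{k} (n−i)/(n−i+c−1)`, the summands `c(c+1)(k+1)P(k)` telescope: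
they are the differences `F(k) − F(k+1)` of `F(k) = (ck+n+c)(n−k+c−1)P(k)`, because
`(n−k+c−2)P(k+1) = (n−k−1)P(k)`. Since `P(n) = 0`, the sum is `F(0) = (n+c)(n−1+c)`, which is
exactly the normalising denominator.
-/

namespace SplitDrift

variable (n : ℕ) (c : ℝ)

noncomputable def partialProd (k : ℕ) : ℝ :=
  ∏ i ∈ Icc 1 k, (((n : ℝ) - i) / ((n : ℝ) - i + c - 1))

noncomputable def potential (k : ℕ) : ℝ :=
  (c * k + n + c) * ((n : ℝ) - k + c - 1) * partialProd n c k

lemma partialProd_zero : partialProd n c 0 = 1 := by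
  simp [partialProd]

lemma partialProd_self (hn : 0 < n) : partialProd n c n = 0 :=
  prod_eq_zero (mem_Icc.mpr ⟨hn, le_rfl⟩) (by simp)

variable {n c}

lemma sub_add_sub_one_mul_partialProd_succ (hc : 0 < c) {k : ℕ} (hk : k < n) :
    ((n : ℝ) - (k + 1) + c - 1) * partialProd n c (k + 1) =
      ((n : ℝ) - (k + 1)) * partialProd n c k := by
  -- the denominator can only vanish at `k + 1 = n`, where the numerator vanishes too
  have hfactor : ((n : ℝ) - (k + 1)) / ((n : ℝ) - (k + 1) + c - 1) * ((n : ℝ) - (k + 1) + c - 1)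
      = (n : ℝ) - (k + 1) := by
    refine div_mul_cancel_of_imp fun hden => ?_
    rcases (Nat.succ_le_of_lt hk).eq_or_lt with heq | hlt
    · simp [← heq]
    · have : (k : ℝ) + 2 ≤ n := by exact_mod_cast hlt
      linarith
  rw [partialProd, prod_Icc_succ_top (Nat.le_add_left 1 k), ← partialProd]
  push_cast
  linear_combination partialProd n c k * hfactor

lemma potential_sub_potential_succ (hc : 0 < c) {k : ℕ} (hk : k < n) :
    potential n c k - potential n c (k + 1) = c * (c + 1) * (k + 1) * partialProd n c k := by
  unfold potential
  push_cast
  linear_combination (-(c * (k + 1) + n + c)) * sub_add_sub_one_mul_partialProd_succ hc hk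

lemma sum_range_mul_partialProd (hc : 0 < c) (hn : 0 < n) :
    ∑ k ∈ range n, c * (c + 1) * (k + 1) * partialProd n c k = (n + c) * (n - 1 + c) := by
  calc ∑ k ∈ range n, c * (c + 1) * (k + 1) * partialProd n c k
      = ∑ k ∈ range n, (potential n c k - potential n c (k + 1)) :=
        sum_congr rfl fun k hk => (potential_sub_potential_succ hc (mem_range.mp hk)).symm
    _ = potential n c 0 - potential n c n := sum_range_sub' _ n
    _ = (n + c) * (n - 1 + c) := by
        rw [potential, potential, partialProd_zero, partialProd_self n c hn]; push_cast; ring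

end SplitDrift

lemma splitDriftPMF_of_lt {n k : ℕ} (r : ℝ) (hk : k < n) :
    splitDriftPMF n r k = 2 * r * (2 * r + 1) * (k + 1) * SplitDrift.partialProd n (2 * r) k /
      ((n + 2 * r) * (n - 1 + 2 * r)) := by
  rw [splitDriftPMF, if_pos hk, SplitDrift.partialProd]
  ring

/-- For every integer `n ≥ 2` and real `r > 0`, the values `p_{n,r}(k)`,
`k = 0, …, n−1`, sum to `1`. -/
theorem sum_splitDriftPMF_eq_one (n : ℕ) (hn : 2 ≤ n) (r : ℝ) (hr : 0 < r) :
    ∑ k ∈ Finset.range n, splitDriftPMF n r k = 1 := by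
  have hc : 0 < 2 * r := by positivity
  have hn' : (2 : ℝ) ≤ n := by exact_mod_cast hn
  rw [sum_congr rfl fun k hk => splitDriftPMF_of_lt r (mem_range.mp hk), ← sum_div,
    SplitDrift.sum_range_mul_partialProd hc (by omega)]
  exact div_self (by nlinarith)
end

section
/- Let (r_n) be a sequence of positive real numbers with r_n/n → ∞ as n → ∞. Then p_{n,r_n}(0) = 2r_n(2r_n+1)/((n+2r_n)(n−1+2r_n)) → 1 as n → ∞. (Sparse regime: the degree of a fixed vertex equals 0 with probability tending to 1.) -/
/-! Dividing numerator and denominator by `r²` writes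
`p_{n,r}(0) = 2(2 + 1/r) / ((n/r + 2)(n/r - 1/r + 2))`, a continuous function of `(n/r, 1/r)`
equal to `1` at `(0, 0)`; and `r_n / n → ∞` forces both `n / r_n → 0` and `r_n → ∞`. -/

open Filter Finset

theorem tendsto_atTop_of_div_natCast_tendsto_atTop {f : ℕ → ℝ}
    (h : Tendsto (fun n => f n / n) atTop atTop) : Tendsto f atTop atTop := by
  refine tendsto_atTop_mono' atTop ?_ h
  filter_upwards [h.eventually_ge_atTop 0, eventually_ge_atTop 1] with n hf hn
  calc f n / n ≤ f n / n * n := le_mul_of_one_le_right hf (by exact_mod_cast hn)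
    _ = f n := div_mul_cancel₀ _ (by positivity)

theorem splitDriftPMF_zero {n : ℕ} (hn : 0 < n) (r : ℝ) :
    splitDriftPMF n r 0 = 2 * r * (2 * r + 1) / ((n + 2 * r) * (n - 1 + 2 * r)) := by
  simp [splitDriftPMF, hn]

theorem splitDriftPMF_zero_eq_of_ne_zero {n : ℕ} (hn : 0 < n) {r : ℝ} (hr : r ≠ 0) :
    splitDriftPMF n r 0 = 2 * (2 + r⁻¹) / ((n / r + 2) * (n / r - r⁻¹ + 2)) := by
  rw [splitDriftPMF_zero hn, ← mul_div_mul_right _ _ (pow_ne_zero 2 (inv_ne_zero hr))]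
  congr 1 <;> field_simp

theorem degree_zero_of_rn_over_n_tendsto_atTop_general (r : ℕ → ℝ)
    (h : Tendsto (fun n => r n / (n : ℝ)) atTop atTop) :
    Tendsto (fun n => splitDriftPMF n (r n) 0) atTop (nhds 1) := by
  have hr : Tendsto r atTop atTop := tendsto_atTop_of_div_natCast_tendsto_atTop h
  have hx : Tendsto (fun n : ℕ => (n : ℝ) / r n) atTop (nhds 0) := by
    simpa only [Pi.inv_def, inv_div] using h.inv_tendsto_atTop
  have hs : Tendsto (fun n => (r n)⁻¹) atTop (nhds 0) := hr.inv_tendsto_atTop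
  have hlim : Tendsto (fun n : ℕ => 2 * (2 + (r n)⁻¹) /
      ((n / r n + 2) * (n / r n - (r n)⁻¹ + 2))) atTop (nhds 1) := by
    have := ((hs.const_add 2).const_mul 2).div
      ((hx.add_const 2).mul ((hx.sub hs).add_const 2)) (by norm_num)
    norm_num at this
    exact this
  refine hlim.congr' ?_
  filter_upwards [eventually_gt_atTop 0, hr.eventually_ne_atTop 0] with n hn hrn
  exact (splitDriftPMF_zero_eq_of_ne_zero hn hrn).symm

/-- Sparse regime: if `r_n/n → ∞`, then
`p_{n,r_n}(0) = 2r_n(2r_n+1)/((n+2r_n)(n-1+2r_n)) → 1`. -/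
theorem degree_zero_of_rn_over_n_tendsto_atTop (r : ℕ → ℝ) (hr : ∀ n, 0 < r n)
    (h : Tendsto (fun n => r n / (n : ℝ)) atTop atTop) :
    Tendsto (fun n => splitDriftPMF n (r n) 0) atTop (nhds 1) :=
  degree_zero_of_rn_over_n_tendsto_atTop_general r h
end

section
/- Let (r_n) be a sequence of positive real numbers such that 2r_n/n → ρ for some ρ > 0. Then for every fixed integer k ≥ 0, p_{n,r_n}(k) → (k+1) · (ρ/(1+ρ))² · (1/(1+ρ))^k as n → ∞. Equivalently, the degree D_n plus one converges in distribution to a size-biased geometric random variable with parameter ρ/(1+ρ). -/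
open Filter Finset

/-- The degree distribution `splitDriftPMF n r k` (for `k < n`) in the variables `x = 1/n`,
`t = 2r/n`; as `n → ∞` with `2r/n → ρ` it is evaluated at `(0, ρ)`. -/
noncomputable def scaledSplitDriftPMF (k : ℕ) (x t : ℝ) : ℝ :=
  t * (t + x) / ((1 + t) * (1 - x + t)) * ((k : ℝ) + 1) *
    ∏ i ∈ Icc 1 k, (1 - i * x) / (1 - i * x + t - x)

theorem splitDriftPMF_eq_scaledSplitDriftPMF {n k : ℕ} (hk : k < n) (r : ℝ) :
    splitDriftPMF n r k = scaledSplitDriftPMF k (1 / n) (2 * r / n) := by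
  have hn : (n : ℝ) ≠ 0 := by exact_mod_cast (Nat.zero_le k).trans_lt hk |>.ne'
  have hfirst : 2 * r / n * (2 * r / n + 1 / n) / ((1 + 2 * r / n) * (1 - 1 / n + 2 * r / n)) =
      2 * r * (2 * r + 1) / ((n + 2 * r) * (n - 1 + 2 * r)) := by
    rw [← div_div_div_cancel_right₀ (mul_ne_zero hn hn) (2 * r * (2 * r + 1))]
    congr 1 <;> field_simp
  have hfactor (i : ℕ) : (1 - i * (1 / n)) / (1 - i * (1 / n) + 2 * r / n - 1 / n) =
      ((n : ℝ) - i) / (n - i + 2 * r - 1) := by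
    rw [← div_div_div_cancel_right₀ hn ((n : ℝ) - i)]
    congr 1 <;> field_simp
  simp only [splitDriftPMF, if_pos hk, scaledSplitDriftPMF, hfirst, hfactor]

theorem scaledSplitDriftPMF_zero (k : ℕ) {ρ : ℝ} (hρ : 1 + ρ ≠ 0) :
    scaledSplitDriftPMF k 0 ρ = ((k : ℝ) + 1) * (ρ / (1 + ρ)) ^ 2 * (1 / (1 + ρ)) ^ k := by
  simp only [scaledSplitDriftPMF, mul_zero, sub_zero, add_zero, prod_const, Nat.card_Icc,
    Nat.add_sub_cancel]
  field_simp

theorem tendsto_scaledSplitDriftPMF {α : Type*} {l : Filter α} {x t : α → ℝ} (k : ℕ) {ρ : ℝ}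
    (hρ : 1 + ρ ≠ 0) (hx : Tendsto x l (nhds 0)) (ht : Tendsto t l (nhds ρ)) :
    Tendsto (fun a => scaledSplitDriftPMF k (x a) (t a)) l
      (nhds (scaledSplitDriftPMF k 0 ρ)) := by
  have hfirst : Tendsto (fun a => t a * (t a + x a) / ((1 + t a) * (1 - x a + t a))) l
      (nhds (ρ * (ρ + 0) / ((1 + ρ) * (1 - 0 + ρ)))) :=
    (ht.mul (ht.add hx)).div ((tendsto_const_nhds.add ht).mul
      ((tendsto_const_nhds.sub hx).add ht)) (by simpa using mul_ne_zero hρ hρ)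
  have hfactor (i : ℕ) : Tendsto (fun a => (1 - i * x a) / (1 - i * x a + t a - x a)) l
      (nhds ((1 - i * 0) / (1 - i * 0 + ρ - 0))) :=
    (tendsto_const_nhds.sub (hx.const_mul _)).div
      (((tendsto_const_nhds.sub (hx.const_mul _)).add ht).sub hx) (by simpa using hρ)
  exact (hfirst.mul_const _).mul (tendsto_finsetProd _ fun i _ => hfactor i)

theorem degree_tendsto_sizeBiased_geometric_general (r : ℕ → ℝ)
    (ρ : ℝ) (hρ : 0 < ρ)
    (h : Tendsto (fun n => 2 * r n / (n : ℝ)) atTop (nhds ρ)) (k : ℕ) :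
    Tendsto (fun n => splitDriftPMF n (r n) k) atTop
      (nhds (((k : ℝ) + 1) * (ρ / (1 + ρ)) ^ 2 * (1 / (1 + ρ)) ^ k)) := by
  have hρ' : 1 + ρ ≠ 0 := by positivity
  rw [← scaledSplitDriftPMF_zero k hρ']
  refine (tendsto_scaledSplitDriftPMF k hρ' tendsto_one_div_atTop_nhds_zero_nat h).congr' ?_
  filter_upwards [eventually_gt_atTop k] with n hn
  exact (splitDriftPMF_eq_scaledSplitDriftPMF hn (r n)).symm

/-- If `2 r_n / n → ρ > 0` then for every fixed `k`,
`p_{n,r_n}(k) → (k+1)·(ρ/(1+ρ))²·(1/(1+ρ))^k`; that is, the degree plus one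
converges in distribution to a size-biased geometric variable with parameter
`ρ/(1+ρ)`. -/
theorem degree_tendsto_sizeBiased_geometric (r : ℕ → ℝ) (hr : ∀ n, 0 < r n)
    (ρ : ℝ) (hρ : 0 < ρ)
    (h : Tendsto (fun n => 2 * r n / (n : ℝ)) atTop (nhds ρ)) (k : ℕ) :
    Tendsto (fun n => splitDriftPMF n (r n) k) atTop
      (nhds (((k : ℝ) + 1) * (ρ / (1 + ρ)) ^ 2 * (1 / (1 + ρ)) ^ k)) :=
  degree_tendsto_sizeBiased_geometric_general r ρ hρ h k
end

section
/- Let (r_n) be a sequence of positive real numbers with r_n → r for some r > 0. Then for every x ∈ [0,1), the rescaled degree density f_n(x) := n · p_{n,r_n}(⌊nx⌋) converges, as n → ∞, to 2r(2r+1) · x · (1−x)^{2r−1}, which is the probability density function of the Beta(2, 2r) distribution. -/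
/-!
Write `c = 2r - 1` and `k = ⌊nx⌋`. Reflecting the index `m = n - i`, the product in
`p_{n,r}(k)` is `∏_{d < m ≤ n-1} m / (m + c)` with `d = n - 1 - k`. Its logarithm is
`-∑ log (1 + c/m) = -c (H_{n-1} - H_d) + O(n c² / d²)`, and as `H_N - log N` converges
(to the Euler–Mascheroni constant), `H_{n-1} - H_d → -log (1 - x)` because
`d / (n - 1) → 1 - x`. Hence the product tends to `(1 - x)^c`, while
`n (k + 1) / ((n + 2r)(n - 1 + 2r)) → x`.
-/

open Filter Finset

open Real Topology

theorem abs_log_one_add_sub_self_le {u : ℝ} (hu : -1 < u) :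
    |log (1 + u) - u| ≤ u ^ 2 / (1 + u) := by
  have hpos : 0 < 1 + u := by linarith
  have hupper : log (1 + u) ≤ u := by linarith [log_le_sub_one_of_pos hpos]
  have hlower : 1 - (1 + u)⁻¹ ≤ log (1 + u) := one_sub_inv_le_log_of_pos hpos
  have hgap : u - (1 - (1 + u)⁻¹) = u ^ 2 / (1 + u) := by field_simp; ring
  rw [abs_of_nonpos (by linarith)]
  linarith

theorem harmonic_sub_harmonic_eq_sum_Ioc {a b : ℕ} (hab : a ≤ b) :
    harmonic b - harmonic a = ∑ i ∈ Ioc a b, (i : ℚ)⁻¹ := by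
  have hIcc : ∀ n : ℕ, Icc 1 n = Ioc 0 n := Icc_add_one_left_eq_Ioc 0
  rw [harmonic_eq_sum_Icc, harmonic_eq_sum_Icc, hIcc, hIcc,
    ← sum_Ioc_consecutive _ (Nat.zero_le a) hab, add_sub_cancel_left]

theorem tendsto_harmonic_sub_harmonic {a b : ℕ → ℕ} {t : ℝ} (hab : ∀ n, a n ≤ b n)
    (ha : Tendsto a atTop atTop) (hlim : Tendsto (fun n => (a n : ℝ) / b n) atTop (𝓝 t))
    (ht : 0 < t) :
    Tendsto (fun n => (harmonic (b n) : ℝ) - harmonic (a n)) atTop (𝓝 (-log t)) := by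
  have hb : Tendsto b atTop atTop := tendsto_atTop_mono hab ha
  have hγ := (tendsto_harmonic_sub_log.comp hb).sub (tendsto_harmonic_sub_log.comp ha)
  have hlog := ((continuousAt_log ht.ne').tendsto.comp hlim).neg
  rw [sub_self] at hγ
  refine (zero_add (-log t) ▸ hγ.add hlog).congr' ?_
  filter_upwards [ha.eventually_gt_atTop 0, hb.eventually_gt_atTop 0] with n han hbn
  simp only [Function.comp_apply]
  rw [log_div (by positivity) (by positivity)]
  ring

theorem tendsto_sum_Ioc_log_one_add_div_sub_div {a b : ℕ → ℕ} {t : ℝ} {c : ℕ → ℝ} {c₀ : ℝ}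
    (ha : Tendsto a atTop atTop) (hlim : Tendsto (fun n => (a n : ℝ) / b n) atTop (𝓝 t))
    (ht : 0 < t) (hc : Tendsto c atTop (𝓝 c₀)) :
    Tendsto (fun n => ∑ m ∈ Ioc (a n) (b n), (log (1 + c n / m) - c n / m)) atTop (𝓝 0) := by
  have hac : Tendsto (fun n => (a n : ℝ) + c n) atTop atTop :=
    (tendsto_natCast_atTop_iff.2 ha).atTop_add hc
  have hbound : Tendsto (fun n => (b n : ℝ) / a n * (c n ^ 2 * ((a n : ℝ) + c n)⁻¹)) atTop
      (𝓝 0) := by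
    simpa only [inv_div, mul_zero, Function.comp_def] using
      (hlim.inv₀ ht.ne').mul ((hc.pow 2).mul (tendsto_inv_atTop_zero.comp hac))
  refine squeeze_zero_norm' ?_ hbound
  filter_upwards [ha.eventually_gt_atTop 0, hac.eventually_gt_atTop 0] with n han hacn
  have hterm : ∀ m ∈ Ioc (a n) (b n),
      |log (1 + c n / m) - c n / m| ≤ c n ^ 2 / (a n * ((a n : ℝ) + c n)) := by
    intro m hm
    have ham : (a n : ℝ) < m := by exact_mod_cast (mem_Ioc.1 hm).1
    have hm0 : (0 : ℝ) < m := by linarith [(a n).cast_nonneg (α := ℝ)]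
    have hmc : 0 < (m : ℝ) + c n := by linarith
    calc |log (1 + c n / m) - c n / m|
        ≤ (c n / m) ^ 2 / (1 + c n / m) :=
          abs_log_one_add_sub_self_le (by rw [lt_div_iff₀ hm0]; linarith)
      _ = c n ^ 2 / (m * (m + c n)) := by field_simp
      _ ≤ c n ^ 2 / (a n * ((a n : ℝ) + c n)) := by gcongr
  have hcard : ((b n - a n : ℕ) : ℝ) ≤ b n := by exact_mod_cast Nat.sub_le _ _
  calc ‖∑ m ∈ Ioc (a n) (b n), (log (1 + c n / m) - c n / m)‖
      ≤ ∑ m ∈ Ioc (a n) (b n), |log (1 + c n / m) - c n / m| := norm_sum_le _ _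
    _ ≤ (b n - a n : ℕ) * (c n ^ 2 / (a n * ((a n : ℝ) + c n))) := by
        simpa only [sum_const, Nat.card_Ioc, nsmul_eq_mul] using sum_le_sum hterm
    _ ≤ b n * (c n ^ 2 / (a n * ((a n : ℝ) + c n))) := by gcongr
    _ = (b n : ℝ) / a n * (c n ^ 2 * ((a n : ℝ) + c n)⁻¹) := by field_simp

theorem tendsto_prod_Ioc_div_add_rpow {a b : ℕ → ℕ} {t : ℝ} {c : ℕ → ℝ} {c₀ : ℝ}
    (hab : ∀ n, a n ≤ b n) (ha : Tendsto a atTop atTop)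
    (hlim : Tendsto (fun n => (a n : ℝ) / b n) atTop (𝓝 t)) (ht : 0 < t)
    (hc : Tendsto c atTop (𝓝 c₀)) :
    Tendsto (fun n => ∏ m ∈ Ioc (a n) (b n), (m : ℝ) / (m + c n)) atTop (𝓝 (t ^ c₀)) := by
  have hsum : Tendsto (fun n => ∑ m ∈ Ioc (a n) (b n), log (1 + c n / m)) atTop
      (𝓝 (c₀ * -log t + 0)) := by
    refine ((hc.mul (tendsto_harmonic_sub_harmonic hab ha hlim ht)).add
      (tendsto_sum_Ioc_log_one_add_div_sub_div ha hlim ht hc)).congr fun n => ?_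
    rw [← Rat.cast_sub, harmonic_sub_harmonic_eq_sum_Ioc (hab n), Rat.cast_sum, mul_sum,
      ← sum_add_distrib]
    refine sum_congr rfl fun m _ => ?_
    push_cast
    ring
  have hlog : -(c₀ * -log t + 0) = log t * c₀ := by ring
  rw [rpow_def_of_pos ht, ← hlog]
  refine ((continuous_exp.tendsto _).comp hsum.neg).congr' ?_
  have hac : Tendsto (fun n => (a n : ℝ) + c n) atTop atTop :=
    (tendsto_natCast_atTop_iff.2 ha).atTop_add hc
  filter_upwards [hac.eventually_gt_atTop 0] with n hacn
  rw [Function.comp_apply, exp_neg, exp_sum, ← prod_inv_distrib]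
  refine prod_congr rfl fun m hm => ?_
  have ham : (a n : ℝ) < m := by exact_mod_cast (mem_Ioc.1 hm).1
  have hm0 : (0 : ℝ) < m := by linarith [(a n).cast_nonneg (α := ℝ)]
  have hmc : 0 < (m : ℝ) + c n := by linarith
  have hfactor : 1 + c n / m = (m + c n) / m := by field_simp
  rw [hfactor, exp_log (by positivity), inv_div]

theorem Finset.prod_Icc_one_sub_eq_prod_Ioc {M : Type*} [CommMonoid M] (f : ℕ → M) {k n : ℕ}
    (h : k < n) : ∏ i ∈ Icc 1 k, f (n - i) = ∏ m ∈ Ioc (n - 1 - k) (n - 1), f m := by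
  refine prod_nbij' (fun i => n - i) (fun m => n - m) ?_ ?_ ?_ ?_ fun _ _ => rfl <;>
    intro i hi <;> simp only [mem_Icc, mem_Ioc] at hi ⊢ <;> omega

theorem tendsto_prod_Icc_sub_div_sub_add_rpow {k : ℕ → ℕ} {x : ℝ} {c : ℕ → ℝ} {c₀ : ℝ}
    (hk : Tendsto (fun n => (k n : ℝ) / n) atTop (𝓝 x)) (hx : x < 1)
    (hc : Tendsto c atTop (𝓝 c₀)) :
    Tendsto (fun n => ∏ i ∈ Icc 1 (k n), ((n : ℝ) - i) / ((n : ℝ) - i + c n)) atTop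
      (𝓝 ((1 - x) ^ c₀)) := by
  have hkn : ∀ᶠ n in atTop, k n < n := by
    filter_upwards [hk.eventually (gt_mem_nhds hx), eventually_gt_atTop 0] with n hlt hn
    rw [div_lt_one (by positivity)] at hlt
    exact_mod_cast hlt
  have hratio : Tendsto (fun n => ((n - 1 - k n : ℕ) : ℝ) / (n - 1 : ℕ)) atTop (𝓝 (1 - x)) := by
    have h := (tendsto_const_nhds (x := (1 : ℝ))).sub
      (hk.mul (tendsto_natCast_div_add_atTop (-1 : ℝ)))
    rw [mul_one] at h
    refine h.congr' ?_
    filter_upwards [hkn, eventually_gt_atTop 1] with n hkn hn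
    have hn' : (1 : ℝ) < n := by exact_mod_cast hn
    have hn0 : (n : ℝ) ≠ 0 := by positivity
    have hn1 : (n : ℝ) - 1 ≠ 0 := by linarith
    rw [Nat.cast_sub (by omega), Nat.cast_sub (by omega), Nat.cast_one, ← sub_eq_add_neg]
    field_simp
  have ha : Tendsto (fun n => n - 1 - k n) atTop atTop := by
    refine tendsto_natCast_atTop_iff.1 <| ((hratio.pos_mul_atTop (sub_pos.2 hx)
      (tendsto_natCast_atTop_iff.2 (tendsto_sub_atTop_nat 1)))).congr' ?_
    filter_upwards [eventually_gt_atTop 1] with n hn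
    have hn' : ((n - 1 : ℕ) : ℝ) ≠ 0 := by exact_mod_cast (Nat.sub_pos_of_lt hn).ne'
    exact div_mul_cancel₀ _ hn'
  refine (tendsto_prod_Ioc_div_add_rpow (fun n => Nat.sub_le _ _) ha hratio (sub_pos.2 hx)
    hc).congr' ?_
  filter_upwards [hkn] with n hkn
  rw [← prod_Icc_one_sub_eq_prod_Ioc (fun m : ℕ => (m : ℝ) / (m + c n)) hkn]
  refine prod_congr rfl fun i hi => ?_
  rw [Nat.cast_sub (by have := (mem_Icc.1 hi).2; omega)]

theorem tendsto_mul_add_one_div_add_mul_add {k : ℕ → ℕ} {x : ℝ} {α β : ℕ → ℝ} {α₀ β₀ : ℝ}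
    (hk : Tendsto (fun n => (k n : ℝ) / n) atTop (𝓝 x)) (hα : Tendsto α atTop (𝓝 α₀))
    (hβ : Tendsto β atTop (𝓝 β₀)) :
    Tendsto (fun n : ℕ => (n : ℝ) * (k n + 1) / ((n + α n) * (n + β n))) atTop (𝓝 x) := by
  have hn := tendsto_natCast_atTop_atTop (R := ℝ)
  have hlim := (hk.add (tendsto_inv_atTop_zero.comp hn)).div
    ((tendsto_const_nhds.add (hα.div_atTop hn)).mul (tendsto_const_nhds.add (hβ.div_atTop hn)))
    (by norm_num : ((1 : ℝ) + 0) * (1 + 0) ≠ 0)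
  rw [add_zero, add_zero, mul_one, div_one] at hlim
  refine hlim.congr' ?_
  filter_upwards [eventually_gt_atTop 0, (hn.atTop_add hα).eventually_gt_atTop 0,
    (hn.atTop_add hβ).eventually_gt_atTop 0] with n hn0 hnα hnβ
  simp only [Pi.div_apply, Function.comp_apply]
  field_simp

theorem rescaled_degree_density_tendsto_beta_general (r : ℕ → ℝ)
    (l : ℝ) (h : Tendsto r atTop (nhds l))
    (x : ℝ) (hx : x ∈ Set.Ico (0 : ℝ) 1) :
    Tendsto (fun n : ℕ => (n : ℝ) * splitDriftPMF n (r n) ⌊(n : ℝ) * x⌋₊)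
      atTop (nhds (2 * l * (2 * l + 1) * x * (1 - x) ^ (2 * l - 1))) := by
  have hk : Tendsto (fun n : ℕ => (⌊(n : ℝ) * x⌋₊ : ℝ) / n) atTop (𝓝 x) := by
    simpa only [mul_comm x, Function.comp_def] using
      (tendsto_nat_floor_mul_div_atTop hx.1).comp tendsto_natCast_atTop_atTop
  have hc : Tendsto (fun n => 2 * r n - 1) atTop (𝓝 (2 * l - 1)) := (h.const_mul 2).sub_const 1
  have hweight := (h.const_mul 2).mul ((h.const_mul 2).add_const 1)
  have hscale := tendsto_mul_add_one_div_add_mul_add hk (h.const_mul 2) hc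
  have hprod := tendsto_prod_Icc_sub_div_sub_add_rpow hk hx.2 hc
  refine ((hweight.mul hscale).mul hprod).congr' ?_
  filter_upwards [eventually_gt_atTop 0] with n hn
  have hkn : ⌊(n : ℝ) * x⌋₊ < n := by
    rw [Nat.floor_lt (by nlinarith [hx.1])]
    nlinarith [hx.2, (Nat.cast_pos (α := ℝ)).2 hn]
  rw [splitDriftPMF, if_pos hkn]
  -- aligns the factors `n - i + 2r - 1` inside the product with `n - i + (2r - 1)`
  simp only [add_sub_assoc]
  ring

/-- If `r_n → r > 0`, then for every `x ∈ [0,1)` the rescaled degree density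
`f_n(x) = n · p_{n,r_n}(⌊nx⌋)` converges to `2r(2r+1) x (1-x)^{2r-1}`, the density
of the Beta(2, 2r) distribution. -/
theorem rescaled_degree_density_tendsto_beta (r : ℕ → ℝ) (hr : ∀ n, 0 < r n)
    (l : ℝ) (hl : 0 < l) (h : Tendsto r atTop (nhds l))
    (x : ℝ) (hx : x ∈ Set.Ico (0 : ℝ) 1) :
    Tendsto (fun n : ℕ => (n : ℝ) * splitDriftPMF n (r n) ⌊(n : ℝ) * x⌋₊)
      atTop (nhds (2 * l * (2 * l + 1) * x * (1 - x) ^ (2 * l - 1))) :=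
  rescaled_degree_density_tendsto_beta_general r l h x hx
end

section
/- Let (r_n) be a sequence of positive real numbers with r_n → ∞ and r_n/n → 0 as n → ∞. Then for every x ≥ 0, the rescaled degree density f_n(x) := (n/r_n) · p_{n,r_n}(⌊(n/r_n)·x⌋) converges, as n → ∞, to 4x e^{−2x}, which is the probability density function of a size-biased exponential distribution with parameter 2. -/
open Filter Finset

/-!
Write `s = n / r_n → ∞` and `K = ⌊s x⌋`, so that `K / s → x` and `K / n → 0`. Then
`s · p_{n,r_n}(K)` is a prefactor tending to `4x` times the inverse of
`∏_{i=1}^{K} (1 + (2r_n - 1)/(n - i))`. Every factor of this product lies between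
`1 + (2r_n - 1)/(n - 1)` and `1 + (2r_n - 1)/(n - K)`, and `K` times either increment tends
to `2x`, so both bounding `K`-th powers, hence the product, tend to `e^{2x}`.
-/

open Topology

theorem tendsto_one_add_pow_of_tendsto_mul {α : Type*} {l : Filter α} {c : α → ℝ} {k : α → ℕ}
    {L : ℝ} (hc : Tendsto c l (𝓝 0)) (hkc : Tendsto (fun a => k a * c a) l (𝓝 L)) :
    Tendsto (fun a => (1 + c a) ^ k a) l (𝓝 (Real.exp L)) := by
  have hpos : ∀ᶠ a in l, 0 < 1 + c a :=
    (hc.const_add 1).eventually_const_lt (by norm_num : (0 : ℝ) < 1 + 0)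
  -- `c / (1 + c) ≤ log (1 + c) ≤ c`, and `k c / (1 + c)` has the same limit as `k c`.
  have hlog : Tendsto (fun a => k a * Real.log (1 + c a)) l (𝓝 L) := by
    have hlower : Tendsto (fun a => k a * c a * (1 + c a)⁻¹) l (𝓝 L) := by
      simpa using hkc.mul ((hc.const_add 1).inv₀ (by norm_num))
    refine tendsto_of_tendsto_of_tendsto_of_le_of_le' hlower hkc ?_ ?_
    · filter_upwards [hpos] with a ha
      have h := Real.one_sub_inv_le_log_of_pos ha
      rw [mul_assoc]
      refine mul_le_mul_of_nonneg_left (le_of_eq_of_le ?_ h) (Nat.cast_nonneg _)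
      field_simp
      ring
    · filter_upwards [hpos] with a ha
      have h := Real.log_le_sub_one_of_pos ha
      exact mul_le_mul_of_nonneg_left (by linarith) (Nat.cast_nonneg _)
  refine (Real.continuous_exp.tendsto L |>.comp hlog).congr' ?_
  filter_upwards [hpos] with a ha
  simp [Real.exp_nat_mul, Real.exp_log ha]

theorem pow_le_prod_one_add_div_sub {n k : ℕ} {d : ℝ} (hd : 0 ≤ d) (hk : k < n) :
    (1 + d / (n - 1)) ^ k ≤ ∏ i ∈ Icc 1 k, (1 + d / (n - i)) := by
  have hn : (1 : ℝ) ≤ n := by exact_mod_cast Nat.one_le_of_lt hk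
  have hb : 0 ≤ d / (n - 1) := div_nonneg hd (by linarith)
  calc (1 + d / (n - 1)) ^ k = ∏ _i ∈ Icc 1 k, (1 + d / (n - 1)) := by simp
    _ ≤ ∏ i ∈ Icc 1 k, (1 + d / (n - i)) := by
      refine prod_le_prod (fun _ _ => by linarith) fun i hi => ?_
      have hi : 1 ≤ i ∧ i ≤ k := mem_Icc.mp hi
      have hin : (i : ℝ) < n := by exact_mod_cast hi.2.trans_lt hk
      have hi1 : (1 : ℝ) ≤ i := by exact_mod_cast hi.1
      gcongr

theorem prod_one_add_div_sub_le_pow {n k : ℕ} {d : ℝ} (hd : 0 ≤ d) (hk : k < n) :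
    ∏ i ∈ Icc 1 k, (1 + d / (n - i)) ≤ (1 + d / (n - k)) ^ k := by
  calc ∏ i ∈ Icc 1 k, (1 + d / (n - i)) ≤ ∏ _i ∈ Icc 1 k, (1 + d / (n - k)) := by
        refine prod_le_prod (fun i hi => ?_) fun i hi => ?_
        · have hin : (i : ℝ) < n := by exact_mod_cast (mem_Icc.mp hi).2.trans_lt hk
          have : 0 ≤ d / (n - i) := div_nonneg hd (by linarith)
          linarith
        · have hik : (i : ℝ) ≤ k := by exact_mod_cast (mem_Icc.mp hi).2
          have hkn : (k : ℝ) < n := by exact_mod_cast hk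
          gcongr
    _ = (1 + d / (n - k)) ^ k := by simp

theorem splitDriftPMF_eq_mul_inv_prod {n k : ℕ} (r : ℝ) (hk : k < n) :
    splitDriftPMF n r k = 2 * r * (2 * r + 1) / ((n + 2 * r) * (n - 1 + 2 * r)) * (k + 1) *
      (∏ i ∈ Icc 1 k, (1 + (2 * r - 1) / (n - i)))⁻¹ := by
  rw [splitDriftPMF, if_pos hk, ← prod_inv_distrib]
  congr 1
  refine prod_congr rfl fun i hi => ?_
  have hin : (n : ℝ) - i ≠ 0 := by
    have : (i : ℝ) < n := by exact_mod_cast (mem_Icc.mp hi).2.trans_lt hk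
    linarith
  field_simp
  ring

theorem eventually_lt_of_tendsto_div_natCast {j : ℕ → ℕ}
    (hj : Tendsto (fun n : ℕ => (j n : ℝ) / n) atTop (𝓝 0)) : ∀ᶠ n in atTop, j n < n := by
  filter_upwards [eventually_gt_atTop 0, hj.eventually_lt_const one_pos] with n hn hjn
  have hn' : (0 : ℝ) < n := by exact_mod_cast hn
  exact_mod_cast (div_lt_one hn').mp hjn

section Asymptotics

variable {r : ℕ → ℝ}

theorem tendsto_natCast_div_atTop (h1 : Tendsto r atTop atTop)
    (h2 : Tendsto (fun n : ℕ => r n / n) atTop (𝓝 0)) :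
    Tendsto (fun n : ℕ => n / r n) atTop atTop := by
  have hpos : Tendsto (fun n : ℕ => r n / n) atTop (𝓝[>] 0) := by
    refine tendsto_nhdsWithin_of_tendsto_nhds_of_eventually_within _ h2 ?_
    filter_upwards [h1.eventually_gt_atTop 0, eventually_gt_atTop 0] with n hr hn
    exact div_pos hr (Nat.cast_pos.mpr hn)
  exact hpos.inv_tendsto_nhdsGT_zero.congr fun n => by simp [inv_div]

variable {x : ℝ}

theorem tendsto_floor_mul_div (h1 : Tendsto r atTop atTop)
    (h2 : Tendsto (fun n : ℕ => r n / n) atTop (𝓝 0)) (hx : 0 ≤ x) :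
    Tendsto (fun n : ℕ => (⌊n / r n * x⌋₊ : ℝ) / (n / r n)) atTop (𝓝 x) := by
  simpa only [Function.comp_def, mul_comm x] using
    (tendsto_nat_floor_mul_div_atTop hx).comp (tendsto_natCast_div_atTop h1 h2)

theorem tendsto_floor_mul_div_natCast (h1 : Tendsto r atTop atTop)
    (h2 : Tendsto (fun n : ℕ => r n / n) atTop (𝓝 0)) (hx : 0 ≤ x) :
    Tendsto (fun n : ℕ => (⌊n / r n * x⌋₊ : ℝ) / n) atTop (𝓝 0) := by
  have hlim := (tendsto_floor_mul_div h1 h2 hx).mul h1.inv_tendsto_atTop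
  rw [mul_zero] at hlim
  refine hlim.congr' ?_
  filter_upwards [h1.eventually_ne_atTop 0, eventually_ne_atTop 0] with n hr hn
  have hn' : (n : ℝ) ≠ 0 := Nat.cast_ne_zero.mpr hn
  simp only [Pi.inv_apply]
  field_simp

theorem tendsto_two_mul_sub_one_div_sub {j : ℕ → ℕ}
    (h2 : Tendsto (fun n : ℕ => r n / n) atTop (𝓝 0))
    (hj : Tendsto (fun n : ℕ => (j n : ℝ) / n) atTop (𝓝 0)) :
    Tendsto (fun n : ℕ => (2 * r n - 1) / (n - j n)) atTop (𝓝 0) := by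
  have hlim := ((h2.const_mul 2).sub tendsto_inv_atTop_nhds_zero_nat).div
    (tendsto_const_nhds.sub hj) (by norm_num : (1 : ℝ) - 0 ≠ 0)
  rw [mul_zero, sub_zero, zero_div] at hlim
  refine hlim.congr' ?_
  filter_upwards [eventually_gt_atTop 0, eventually_lt_of_tendsto_div_natCast hj] with n hn hjn
  have hn' : (n : ℝ) ≠ 0 := by positivity
  have hjn' : (n : ℝ) - j n ≠ 0 := sub_ne_zero.mpr (by exact_mod_cast hjn.ne')
  simp only [Pi.div_apply]
  field_simp

theorem tendsto_floor_mul_mul_two_mul_sub_one_div_sub {j : ℕ → ℕ}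
    (h1 : Tendsto r atTop atTop) (h2 : Tendsto (fun n : ℕ => r n / n) atTop (𝓝 0)) (hx : 0 ≤ x)
    (hj : Tendsto (fun n : ℕ => (j n : ℝ) / n) atTop (𝓝 0)) :
    Tendsto (fun n : ℕ => ⌊n / r n * x⌋₊ * ((2 * r n - 1) / (n - j n))) atTop (𝓝 (2 * x)) := by
  have hlim := ((tendsto_floor_mul_div h1 h2 hx).mul
    ((tendsto_const_nhds (x := (2 : ℝ))).sub h1.inv_tendsto_atTop)).div
    (tendsto_const_nhds.sub hj) (by norm_num : (1 : ℝ) - 0 ≠ 0)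
  rw [sub_zero, sub_zero, div_one, mul_comm] at hlim
  refine hlim.congr' ?_
  filter_upwards [h1.eventually_ne_atTop 0, eventually_gt_atTop 0,
    eventually_lt_of_tendsto_div_natCast hj] with n hr hn hjn
  have hn' : (n : ℝ) ≠ 0 := by positivity
  have hjn' : (n : ℝ) - j n ≠ 0 := sub_ne_zero.mpr (by exact_mod_cast hjn.ne')
  simp only [Pi.div_apply, Pi.inv_apply]
  field_simp

theorem tendsto_prod_one_add_two_mul_sub_one_div_sub (h1 : Tendsto r atTop atTop)
    (h2 : Tendsto (fun n : ℕ => r n / n) atTop (𝓝 0)) (hx : 0 ≤ x) :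
    Tendsto (fun n : ℕ => ∏ i ∈ Icc 1 ⌊n / r n * x⌋₊, (1 + (2 * r n - 1) / (n - i))) atTop
      (𝓝 (Real.exp (2 * x))) := by
  have hK := tendsto_floor_mul_div_natCast h1 h2 hx
  have hone : Tendsto (fun n : ℕ => ((1 : ℕ) : ℝ) / n) atTop (𝓝 0) := by
    simpa using tendsto_inv_atTop_nhds_zero_nat
  have lower := tendsto_one_add_pow_of_tendsto_mul (tendsto_two_mul_sub_one_div_sub h2 hone)
    (tendsto_floor_mul_mul_two_mul_sub_one_div_sub h1 h2 hx hone)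
  have upper := tendsto_one_add_pow_of_tendsto_mul (tendsto_two_mul_sub_one_div_sub h2 hK)
    (tendsto_floor_mul_mul_two_mul_sub_one_div_sub h1 h2 hx hK)
  simp only [Nat.cast_one] at lower
  refine tendsto_of_tendsto_of_tendsto_of_le_of_le' lower upper ?_ ?_
  all_goals
    filter_upwards [h1.eventually_ge_atTop (1 / 2), eventually_lt_of_tendsto_div_natCast hK]
      with n hr hKn
  · exact pow_le_prod_one_add_div_sub (by linarith) hKn
  · exact prod_one_add_div_sub_le_pow (by linarith) hKn

theorem tendsto_natCast_div_mul_splitDrift_prefactor (h1 : Tendsto r atTop atTop)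
    (h2 : Tendsto (fun n : ℕ => r n / n) atTop (𝓝 0)) (hx : 0 ≤ x) :
    Tendsto (fun n : ℕ => n / r n * (2 * r n * (2 * r n + 1) / ((n + 2 * r n) * (n - 1 + 2 * r n)))
      * (⌊n / r n * x⌋₊ + 1)) atTop (𝓝 (4 * x)) := by
  have hu := h2.const_mul 2
  have hlim := (((tendsto_floor_mul_div h1 h2 hx).add h2).mul
    (((tendsto_const_nhds (x := (2 : ℝ))).add h1.inv_tendsto_atTop).const_mul 2)).div
    (((tendsto_const_nhds (x := (1 : ℝ))).add hu).mul
      (((tendsto_const_nhds (x := (1 : ℝ))).sub tendsto_inv_atTop_nhds_zero_nat).add hu))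
    (by norm_num)
  rw [show (x + 0) * (2 * (2 + 0)) / ((1 + 2 * 0) * (1 - 0 + 2 * 0)) = 4 * x by ring] at hlim
  refine hlim.congr' ?_
  filter_upwards [h1.eventually_gt_atTop 0, eventually_gt_atTop 0] with n hr hn
  have hn' : (1 : ℝ) ≤ n := by exact_mod_cast hn
  have hd₁ : (n : ℝ) + 2 * r n ≠ 0 := by positivity
  have hd₂ : (n : ℝ) - 1 + 2 * r n ≠ 0 := by linarith
  simp only [Pi.div_apply, Pi.inv_apply]
  field_simp

end Asymptotics

theorem rescaled_degree_density_tendsto_sizeBiased_exponential_general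
    (r : ℕ → ℝ)
    (h1 : Tendsto r atTop atTop) (h2 : Tendsto (fun n => r n / (n : ℝ)) atTop (nhds 0))
    (x : ℝ) (hx : 0 ≤ x) :
    Tendsto (fun n : ℕ => ((n : ℝ) / r n) * splitDriftPMF n (r n) ⌊((n : ℝ) / r n) * x⌋₊)
      atTop (nhds (4 * x * Real.exp (-2 * x))) := by
  have hlim := (tendsto_natCast_div_mul_splitDrift_prefactor h1 h2 hx).mul
    ((tendsto_prod_one_add_two_mul_sub_one_div_sub h1 h2 hx).inv₀ (Real.exp_pos _).ne')
  rw [← Real.exp_neg, ← neg_mul] at hlim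
  refine hlim.congr' ?_
  filter_upwards [eventually_lt_of_tendsto_div_natCast (tendsto_floor_mul_div_natCast h1 h2 hx)]
    with n hn
  rw [splitDriftPMF_eq_mul_inv_prod _ hn]
  ring

/-- Intermediate regime: if `r_n → ∞` and `r_n/n → 0`, then for every `x ≥ 0`
the rescaled degree density `f_n(x) = (n/r_n) · p_{n,r_n}(⌊(n/r_n)x⌋)` converges to
`4x e^{-2x}`, the density of a size-biased exponential distribution with parameter 2. -/
theorem rescaled_degree_density_tendsto_sizeBiased_exponential
    (r : ℕ → ℝ) (hr : ∀ n, 0 < r n)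
    (h1 : Tendsto r atTop atTop) (h2 : Tendsto (fun n => r n / (n : ℝ)) atTop (nhds 0))
    (x : ℝ) (hx : 0 ≤ x) :
    Tendsto (fun n : ℕ => ((n : ℝ) / r n) * splitDriftPMF n (r n) ⌊((n : ℝ) / r n) * x⌋₊)
      atTop (nhds (4 * x * Real.exp (-2 * x))) :=
  rescaled_degree_density_tendsto_sizeBiased_exponential_general r h1 h2 x hx
end

section
/- Let (r_n) be a sequence of positive real numbers with r_n → ∞ and r_n/n → 0 as n → ∞, let x ≥ 0, and set k_n = ⌊n x / r_n⌋. Then Γ(n) · Γ(n − k_n + 2r_n − 1) / (Γ(n − k_n) · Γ(n + 2r_n − 1)) → e^{−2x} as n → ∞, where Γ denotes the gamma function. -/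
open Filter Finset Real Topology

/-! With `a = n - k` and `c = 2r - 1`, the functional equation of `Γ` turns the ratio into
`∏_{j<k} (a + j) / (a + c + j)`. The factors increase with `j`, so the product lies between
`(a / (a + c))^k` and `((n - 1) / (n - 1 + c))^k`. Both bounds are of the form `(1 + c/m)^(-k)`
with `m ~ n`, and `k c / n → 2x`, so both tend to `e^(-2x)`. -/

theorem Real.Gamma_add_nat_eq_prod_mul {a : ℝ} (ha : 0 < a) (k : ℕ) :
    Gamma (a + k) = (∏ j ∈ range k, (a + j)) * Gamma a := by
  induction k with
  | zero => simp
  | succ k ih =>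
    rw [Nat.cast_succ, ← add_assoc, Gamma_add_one (by positivity), ih, prod_range_succ]
    ring

theorem Real.Gamma_ratio_eq_prod {a b : ℝ} (ha : 0 < a) (hb : 0 < b) (k : ℕ) :
    Gamma (a + k) * Gamma b / (Gamma a * Gamma (b + k)) =
      ∏ j ∈ range k, (a + j) / (b + j) := by
  have hprod : ∏ j ∈ range k, (b + j) ≠ 0 := prod_ne_zero_iff.mpr fun j _ => by positivity
  rw [Gamma_add_nat_eq_prod_mul ha, Gamma_add_nat_eq_prod_mul hb, prod_div_distrib]
  field_simp [(Gamma_pos_of_pos ha).ne', (Gamma_pos_of_pos hb).ne']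

theorem div_add_le_div_add {s t c : ℝ} (hs : 0 < s) (hst : s ≤ t) (hc : 0 ≤ c) :
    s / (s + c) ≤ t / (t + c) := by
  rw [div_le_div_iff₀ (by positivity) (by linarith)]
  nlinarith

theorem pow_le_prod_div_add {a c : ℝ} (ha : 0 < a) (hc : 0 ≤ c) (k : ℕ) :
    (a / (a + c)) ^ k ≤ ∏ j ∈ range k, (a + j) / (a + c + j) := by
  rw [pow_eq_prod_const]
  refine prod_le_prod (fun _ _ => by positivity) fun j _ => ?_
  rw [add_right_comm]
  exact div_add_le_div_add ha (by simp) hc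

theorem prod_div_add_le_pow {a c : ℝ} (ha : 0 < a) (hc : 0 ≤ c) (k : ℕ) :
    ∏ j ∈ range k, (a + j) / (a + c + j) ≤ ((a + k - 1) / (a + k - 1 + c)) ^ k := by
  rw [pow_eq_prod_const]
  refine prod_le_prod (fun _ _ => by positivity) fun j hj => ?_
  have hjk : (j : ℝ) + 1 ≤ k := by exact_mod_cast mem_range.mp hj
  rw [add_right_comm]
  exact div_add_le_div_add (by positivity) (by linarith) hc

theorem Real.Gamma_ratio_mem_Icc {a c : ℝ} (ha : 0 < a) (hc : 0 ≤ c) (k : ℕ) :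
    Gamma (a + k) * Gamma (a + c) / (Gamma a * Gamma (a + c + k)) ∈
      Set.Icc ((a / (a + c)) ^ k) (((a + k - 1) / (a + k - 1 + c)) ^ k) := by
  rw [Gamma_ratio_eq_prod ha (by positivity)]
  exact ⟨pow_le_prod_div_add ha hc k, prod_div_add_le_pow ha hc k⟩

section Limits

variable {α : Type*} {l : Filter α}

theorem tendsto_one_add_pow_exp_of_tendsto_mul {u : α → ℝ} {k : α → ℕ} {L : ℝ}
    (hu : Tendsto u l (𝓝 0)) (hku : Tendsto (fun i => k i * u i) l (𝓝 L)) :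
    Tendsto (fun i => (1 + u i) ^ k i) l (𝓝 (exp L)) := by
  have hpos : ∀ᶠ i in l, 0 < 1 + u i := by
    filter_upwards [hu.eventually (eventually_gt_nhds (by norm_num : (-1 : ℝ) < 0))] with i hi
    linarith
  have hlow : Tendsto (fun i => k i * u i / (1 + u i)) l (𝓝 L) := by
    simpa [Pi.div_def] using hku.div (tendsto_const_nhds.add hu) (by norm_num : (1 : ℝ) + 0 ≠ 0)
  have hlog : Tendsto (fun i => k i * log (1 + u i)) l (𝓝 L) := by
    refine tendsto_of_tendsto_of_tendsto_of_le_of_le' hlow hku ?_ ?_ <;>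
      filter_upwards [hpos] with i hi
    · rw [mul_div_assoc]
      gcongr
      calc u i / (1 + u i) = 1 - (1 + u i)⁻¹ := by field_simp; ring
        _ ≤ log (1 + u i) := one_sub_inv_le_log_of_pos hi
    · gcongr
      linarith [log_le_sub_one_of_pos hi]
  refine hlog.rexp.congr' ?_
  filter_upwards [hpos] with i hi
  rw [exp_nat_mul, exp_log hi]

theorem tendsto_div_add_pow_exp {s m c : α → ℝ} {k : α → ℕ} {L : ℝ}
    (hm : Tendsto (fun i => m i / s i) l (𝓝 1)) (hc : Tendsto (fun i => c i / s i) l (𝓝 0))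
    (hkc : Tendsto (fun i => k i * c i / s i) l (𝓝 L)) :
    Tendsto (fun i => (m i / (m i + c i)) ^ k i) l (𝓝 (exp (-L))) := by
  have hne : ∀ᶠ i in l, m i ≠ 0 ∧ s i ≠ 0 := by
    filter_upwards [hm.eventually_ne one_ne_zero] with i hi
    exact div_ne_zero_iff.mp hi
  have hu : Tendsto (fun i => c i / m i) l (𝓝 0) := by
    refine (zero_div (1 : ℝ) ▸ hc.div hm one_ne_zero).congr' ?_
    filter_upwards [hne] with i hi
    exact div_div_div_cancel_right₀ hi.2 _ _
  have hku : Tendsto (fun i => k i * (c i / m i)) l (𝓝 L) := by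
    refine (div_one L ▸ hkc.div hm one_ne_zero).congr' ?_
    filter_upwards [hne] with i hi
    rw [Pi.div_apply, div_div_div_cancel_right₀ hi.2, mul_div_assoc]
  have hpow := (tendsto_one_add_pow_exp_of_tendsto_mul hu hku).inv₀ (exp_pos L).ne'
  refine (exp_neg L ▸ hpow).congr' ?_
  filter_upwards [hne] with i hi
  rw [← inv_pow, one_add_div hi.1, inv_div]

theorem tendsto_natFloor_mul_div {r s : α → ℝ} {x : ℝ} (hr : ∀ᶠ i in l, 0 < r i)
    (hs : ∀ᶠ i in l, 0 < s i) (hrs : Tendsto (fun i => r i / s i) l (𝓝 0)) (hx : 0 ≤ x) :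
    Tendsto (fun i => (⌊s i * x / r i⌋₊ : ℝ) * r i / s i) l (𝓝 x) := by
  refine tendsto_of_tendsto_of_tendsto_of_le_of_le' (by simpa using tendsto_const_nhds.sub hrs)
    tendsto_const_nhds ?_ ?_ <;> filter_upwards [hr, hs] with i hri hsi
  · calc x - r i / s i = (s i * x / r i - 1) * r i / s i := by field_simp
      _ ≤ ⌊s i * x / r i⌋₊ * r i / s i := by gcongr; exact (Nat.sub_one_lt_floor _).le
  · calc (⌊s i * x / r i⌋₊ : ℝ) * r i / s i ≤ s i * x / r i * r i / s i := by
          gcongr; exact Nat.floor_le (by positivity)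
      _ = x := by field_simp

theorem tendsto_natFloor_div {r s : α → ℝ} {x : ℝ} (hr : ∀ᶠ i in l, 0 < r i)
    (hs : ∀ᶠ i in l, 0 < s i) (hrs : Tendsto (fun i => r i / s i) l (𝓝 0)) (hx : 0 ≤ x)
    (hr_top : Tendsto r l atTop) :
    Tendsto (fun i => (⌊s i * x / r i⌋₊ : ℝ) / s i) l (𝓝 0) := by
  refine (mul_zero x ▸ (tendsto_natFloor_mul_div hr hs hrs hx).mul
    hr_top.inv_tendsto_atTop).congr' ?_
  filter_upwards [hr] with i hri
  simp only [Pi.inv_apply]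
  field_simp

end Limits

/-- Key Stirling-type gamma-ratio estimate: if `r_n → ∞`, `r_n/n → 0`, `x ≥ 0`
and `k_n = ⌊n x / r_n⌋`, then
`Γ(n) Γ(n - k_n + 2r_n - 1) / (Γ(n - k_n) Γ(n + 2r_n - 1)) → e^{-2x}`. -/
theorem gamma_ratio_tendsto_exp (r : ℕ → ℝ) (hr : ∀ n, 0 < r n)
    (h1 : Tendsto r atTop atTop) (h2 : Tendsto (fun n => r n / (n : ℝ)) atTop (nhds 0))
    (x : ℝ) (hx : 0 ≤ x) :
    Tendsto
      (fun n : ℕ =>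
        Real.Gamma (n : ℝ) *
          Real.Gamma ((n : ℝ) - (⌊(n : ℝ) * x / r n⌋₊ : ℝ) + 2 * r n - 1) /
        (Real.Gamma ((n : ℝ) - (⌊(n : ℝ) * x / r n⌋₊ : ℝ)) *
          Real.Gamma ((n : ℝ) + 2 * r n - 1)))
      atTop (nhds (Real.exp (-2 * x))) := by
  set k : ℕ → ℕ := fun n => ⌊(n : ℝ) * x / r n⌋₊
  have hn : ∀ᶠ n : ℕ in atTop, (0 : ℝ) < n :=
    tendsto_natCast_atTop_atTop.eventually_gt_atTop 0
  have hkr : Tendsto (fun n => (k n : ℝ) * r n / n) atTop (𝓝 x) :=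
    tendsto_natFloor_mul_div (.of_forall hr) hn h2 hx
  have hk : Tendsto (fun n => (k n : ℝ) / n) atTop (𝓝 0) :=
    tendsto_natFloor_div (.of_forall hr) hn h2 hx h1
  have hc : Tendsto (fun n => (2 * r n - 1) / n) atTop (𝓝 0) := by
    simpa [sub_div, mul_div_assoc] using (h2.const_mul 2).sub tendsto_one_div_atTop_nhds_zero_nat
  have hkc : Tendsto (fun n => k n * (2 * r n - 1) / n) atTop (𝓝 (2 * x)) :=
    (sub_zero (2 * x) ▸ (hkr.const_mul 2).sub hk).congr fun n => by ring
  have hm₁ : Tendsto (fun n : ℕ => ((n : ℝ) - k n) / n) atTop (𝓝 1) :=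
    (sub_zero (1 : ℝ) ▸ tendsto_const_nhds.sub hk).congr' <| by
      filter_upwards [hn] with n hn0; field_simp
  have hm₂ : Tendsto (fun n : ℕ => ((n : ℝ) - k n + k n - 1) / n) atTop (𝓝 1) :=
    (sub_zero (1 : ℝ) ▸ tendsto_const_nhds.sub tendsto_one_div_atTop_nhds_zero_nat).congr' <| by
      filter_upwards [hn] with n hn0; field_simp; ring
  have hlower := tendsto_div_add_pow_exp hm₁ hc hkc
  have hupper := tendsto_div_add_pow_exp hm₂ hc hkc
  have hbounds : ∀ᶠ n : ℕ in atTop,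
      Gamma n * Gamma (n - k n + 2 * r n - 1) / (Gamma (n - k n) * Gamma (n + 2 * r n - 1)) ∈
        Set.Icc (((n - k n) / (n - k n + (2 * r n - 1))) ^ k n)
          (((n - k n + k n - 1) / (n - k n + k n - 1 + (2 * r n - 1))) ^ k n) := by
    filter_upwards [hn, hk.eventually (eventually_lt_nhds one_pos), h1.eventually_ge_atTop 1]
      with n hn0 hkn hrn
    have ha : 0 < (n : ℝ) - k n := by rw [div_lt_one hn0] at hkn; linarith
    convert Gamma_ratio_mem_Icc ha (by linarith : 0 ≤ 2 * r n - 1) (k n) using 3 <;> ring_nf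
  rw [neg_mul]
  exact tendsto_of_tendsto_of_tendsto_of_le_of_le' hlower hupper (hbounds.mono fun _ h => h.1)
    (hbounds.mono fun _ h => h.2)
end

section
/- Let (r_n) be a sequence of positive real numbers with r_n → ∞ and r_n/n → 0 as n → ∞, and set k_n = ⌈n·log(r_n)/r_n⌉. Then binom(n, k_n) · (1+r_n)^{−(k_n−1)} → 0 as n → ∞. (Consequently, the clique number κ_n of the split-and-drift random graph G_{n,r_n} satisfies κ_n ≤ n·log(r_n)/r_n asymptotically almost surely.) -/
/-!
Bound `C(n, k) ≤ (e n / k)^k`. With `k ≥ n log r / r` and `r ≤ n` this gives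
`C(n, k) / (1 + r)^k ≤ (e / log r)^k`, and once `log r ≥ e³` also `k ≥ log r`, so the ratio is at
most `e^{-2k} ≤ r^{-2}`. Hence the expected number of `k`-cliques is at most
`(1 + r) / r² ≤ 2 / r → 0`.
-/

open Filter Real

theorem Nat.choose_le_exp_one_mul_div_pow (n k : ℕ) :
    (n.choose k : ℝ) ≤ (exp 1 * n / k) ^ k := by
  rcases k.eq_zero_or_pos with rfl | hk
  · simp
  have hfact : (k : ℝ) ^ k / exp k ≤ k.factorial := by
    rw [div_le_iff₀ (exp_pos _), mul_comm, ← div_le_iff₀ (by positivity)]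
    exact pow_div_factorial_le_exp (k : ℝ) k.cast_nonneg k
  calc (n.choose k : ℝ) ≤ n ^ k / k.factorial := Nat.choose_le_pow_div k n
    _ ≤ n ^ k / ((k : ℝ) ^ k / exp k) := by gcongr
    _ = (exp 1 * n / k) ^ k := by rw [← exp_one_pow, div_pow, mul_pow]; field_simp

theorem choose_div_one_add_pow_le_inv_sq {n k : ℕ} {R : ℝ} (hR : exp (exp 3) ≤ R)
    (hRn : R ≤ n) (hk : n * log R / R ≤ k) :
    (n.choose k : ℝ) / (1 + R) ^ k ≤ (R ^ 2)⁻¹ := by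
  have hR0 : 0 < R := (exp_pos _).trans_le hR
  have hlog : exp 3 ≤ log R := (le_log_iff_exp_le hR0).2 hR
  have hlog0 : 0 < log R := (exp_pos 3).trans_le hlog
  have hlogk : log R ≤ k := le_trans (by rw [le_div_iff₀ hR0]; nlinarith) hk
  have hk0 : (0 : ℝ) < k := hlog0.trans_le hlogk
  have hratio : exp 1 * n / k / (1 + R) ≤ exp (-2) :=
    calc exp 1 * n / k / (1 + R) ≤ exp 1 / log R := by
          rw [div_div, div_le_div_iff₀ (by positivity) hlog0]
          rw [div_le_iff₀ hR0] at hk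
          nlinarith [exp_pos 1]
      _ ≤ exp 1 / exp 3 := by gcongr
      _ = exp (-2) := by rw [← exp_sub]; norm_num
  calc (n.choose k : ℝ) / (1 + R) ^ k ≤ (exp 1 * n / k) ^ k / (1 + R) ^ k := by
        gcongr; exact Nat.choose_le_exp_one_mul_div_pow n k
    _ = (exp 1 * n / k / (1 + R)) ^ k := (div_pow _ _ _).symm
    _ ≤ exp (-2) ^ k := by gcongr
    _ = exp (-2 * k) := by rw [← exp_nat_mul]; ring_nf
    _ ≤ exp (-2 * log R) := exp_le_exp.2 (by linarith)
    _ = (R ^ 2)⁻¹ := by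
        rw [neg_mul, exp_neg, show 2 * log R = log (R ^ 2) by rw [log_pow]; norm_num,
          exp_log (by positivity)]

theorem choose_mul_zpow_neg_sub_one_le {n k : ℕ} {R : ℝ} (hR : exp (exp 3) ≤ R)
    (hRn : R ≤ n) (hk : n * log R / R ≤ k) :
    (n.choose k : ℝ) * (1 + R) ^ (-((k : ℤ) - 1)) ≤ 2 / R := by
  have hR1 : 1 ≤ R := (one_le_exp (exp_pos 3).le).trans hR
  have hzpow : (1 + R) ^ (-((k : ℤ) - 1)) = (1 + R) / (1 + R) ^ k := by
    rw [neg_sub, zpow_sub₀ (by positivity), zpow_one, zpow_natCast]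
  calc (n.choose k : ℝ) * (1 + R) ^ (-((k : ℤ) - 1))
        = (1 + R) * ((n.choose k : ℝ) / (1 + R) ^ k) := by rw [hzpow]; ring
    _ ≤ (1 + R) * (R ^ 2)⁻¹ := by
        gcongr; exact choose_div_one_add_pow_le_inv_sq hR hRn hk
    _ ≤ 2 / R := by
        rw [← div_eq_mul_inv, div_le_div_iff₀ (by positivity) (by positivity)]
        nlinarith

theorem expected_cliques_tendsto_zero_general (r : ℕ → ℝ)
    (h1 : Tendsto r atTop atTop) (h2 : Tendsto (fun n => r n / (n : ℝ)) atTop (nhds 0)) :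
    Tendsto
      (fun n : ℕ =>
        (n.choose ⌈(n : ℝ) * Real.log (r n) / r n⌉₊ : ℝ) *
          (1 + r n) ^ (-((⌈(n : ℝ) * Real.log (r n) / r n⌉₊ : ℤ) - 1)))
      atTop (nhds 0) := by
  refine squeeze_zero' ?_ ?_ ((tendsto_const_nhds (x := (2 : ℝ))).div_atTop h1)
  · filter_upwards [h1.eventually_gt_atTop 0] with n hn
    positivity
  · filter_upwards [h1.eventually_ge_atTop (exp (exp 3)),
      h2.eventually (eventually_le_nhds one_pos), eventually_gt_atTop 0] with n hr hrn hn
    exact choose_mul_zpow_neg_sub_one_le hr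
      ((div_le_one (by positivity)).1 hrn) (Nat.le_ceil _)

/-- If `r_n → ∞` and `r_n/n → 0`, and `k_n = ⌈n log(r_n) / r_n⌉`, then
`C(n, k_n) · (1+r_n)^{-(k_n-1)} → 0`. (Hence the clique number of `G_{n,r_n}`
is at most `n log(r_n)/r_n` asymptotically almost surely.) -/
theorem expected_cliques_tendsto_zero (r : ℕ → ℝ) (hr : ∀ n, 0 < r n)
    (h1 : Tendsto r atTop atTop) (h2 : Tendsto (fun n => r n / (n : ℝ)) atTop (nhds 0)) :
    Tendsto
      (fun n : ℕ =>
        (n.choose ⌈(n : ℝ) * Real.log (r n) / r n⌉₊ : ℝ) *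
          (1 + r n) ^ (-((⌈(n : ℝ) * Real.log (r n) / r n⌉₊ : ℤ) - 1)))
      atTop (nhds 0) :=
  expected_cliques_tendsto_zero_general r h1 h2
end
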